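/- The reachability relation on acyclic orientations under sink-firing is symmetric: if orientation v is reachable from orientation u by a sequence of sink firings, then u is reachable from v. -/

import Mathlib

/-!
Firing a sink `s` reverses the cut between `{s}` and `V \ {s}`, all of whose edges pointed into
`s`. More generally, if no edge enters a finite set `C`, reversing the cut of `C` keeps the
orientation acyclic, and a vertex `t ∈ C` with no successor in `C` becomes a sink whose firing
turns the cut of `C` into the cut of `C \ {t}`. Firing all of `V \ {s}` in this order therefore
undoes the firing of `s`.
-/

/-- An edge orientation of a simple graph `G`: each edge gets exactly one direction. -/
structure EdgeOrientation {V : Type*} (G : SimpleGraph V) where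
  dir : V → V → Prop
  dir_adj : ∀ u v, dir u v → G.Adj u v
  dir_total : ∀ u v, G.Adj u v → (dir u v ↔ ¬ dir v u)

namespace EdgeOrientation

variable {V : Type*} {G : SimpleGraph V}

/-- An orientation is acyclic if it admits no directed cycle. -/
def Acyclic (o : EdgeOrientation G) : Prop :=
  ∀ v, ¬ Relation.TransGen o.dir v v

/-- A sink is a vertex with no outgoing edges. -/
def IsSink (o : EdgeOrientation G) (s : V) : Prop :=
  ∀ t, ¬ o.dir s t

/-- The direction relation obtained by reversing all edges incident to `s`. -/
def fireDir (s : V) (d : V → V → Prop) : V → V → Prop :=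
  fun u v => ((u = s ∨ v = s) ∧ d v u) ∨ (¬ (u = s ∨ v = s) ∧ d u v)

/-- One sink-firing move on acyclic orientations. -/
def FireStep (o o' : EdgeOrientation G) : Prop :=
  o.Acyclic ∧ ∃ s, o.IsSink s ∧ o'.dir = fireDir s o.dir

/-- Reachability by finite sequences of sink-firing moves. -/
def Reach (o o' : EdgeOrientation G) : Prop :=
  Relation.ReflTransGen FireStep o o'

/-- `FireSeq o l o'` : starting from `o`, firing the vertices in the list `l` in order
(each of which must be a sink of an acyclic orientation at its turn) yields `o'`. -/
def FireSeq : EdgeOrientation G → List V → EdgeOrientation G → Prop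
  | o, [], o' => o = o'
  | o, s :: l, o' =>
      ∃ o₁ : EdgeOrientation G,
        o.Acyclic ∧ o.IsSink s ∧ o₁.dir = fireDir s o.dir ∧ FireSeq o₁ l o'

end EdgeOrientation

namespace Relation

theorem TransGen.of_invariant {α : Type*} {r s : α → α → Prop} {P : α → Prop}
    (h : ∀ a b, r a b → P a → P b ∧ s a b) {a b : α} (hab : TransGen r a b) (ha : P a) :
    TransGen s a b := by
  suffices P b ∧ TransGen s a b from this.2
  induction hab with
  | single hab => exact ⟨(h _ _ hab ha).1, .single (h _ _ hab ha).2⟩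
  | tail _ hbc ih => exact ⟨(h _ _ hbc ih.1).1, ih.2.tail (h _ _ hbc ih.1).2⟩

end Relation

namespace EdgeOrientation

open Relation

variable {V : Type*} {G : SimpleGraph V}

@[ext]
theorem ext {o o' : EdgeOrientation G} (h : o.dir = o'.dir) : o = o' := by
  cases o; cases o'; cases h; rfl

def reverseCut (S : Set V) (o : EdgeOrientation G) : EdgeOrientation G where
  dir u v := ((u ∈ S ↔ v ∈ S) ∧ o.dir u v) ∨ (¬(u ∈ S ↔ v ∈ S) ∧ o.dir v u)
  dir_adj u v := by
    rintro (⟨_, h⟩ | ⟨_, h⟩)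
    exacts [o.dir_adj _ _ h, (o.dir_adj _ _ h).symm]
  dir_total u v hadj := by
    have := o.dir_total u v hadj
    have := o.dir_total v u hadj.symm
    by_cases u ∈ S <;> by_cases v ∈ S <;> simp_all

theorem reverseCut_dir (S : Set V) (o : EdgeOrientation G) (u v : V) :
    (o.reverseCut S).dir u v ↔
      ((u ∈ S ↔ v ∈ S) ∧ o.dir u v) ∨ (¬(u ∈ S ↔ v ∈ S) ∧ o.dir v u) :=
  Iff.rfl

@[simp]
theorem reverseCut_empty (o : EdgeOrientation G) : o.reverseCut ∅ = o := by
  ext u v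
  simp [reverseCut_dir]

theorem reverseCut_compl (S : Set V) (o : EdgeOrientation G) :
    o.reverseCut Sᶜ = o.reverseCut S := by
  ext u v
  simp only [reverseCut_dir, Set.mem_compl_iff, not_iff_not]

theorem reverseCut_reverseCut (S T : Set V) (o : EdgeOrientation G) :
    (o.reverseCut T).reverseCut S = o.reverseCut (symmDiff S T) := by
  ext u v
  simp only [reverseCut_dir, Set.mem_symmDiff]
  by_cases u ∈ S <;> by_cases v ∈ S <;> by_cases u ∈ T <;> by_cases v ∈ T <;> simp_all

theorem fireDir_eq_reverseCut_singleton (s : V) (o : EdgeOrientation G) :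
    fireDir s o.dir = (o.reverseCut {s}).dir := by
  ext u v
  simp only [fireDir, reverseCut_dir, Set.mem_singleton_iff]
  by_cases u = s <;> by_cases v = s <;> simp_all

theorem Acyclic.reverseCut {o : EdgeOrientation G} (ho : o.Acyclic) {C : Set V}
    (hC : ∀ a ∉ C, ∀ b ∈ C, ¬o.dir a b) : (o.reverseCut C).Acyclic := by
  -- after the reversal every edge of the cut enters `C`
  have forward : ∀ a b, (o.reverseCut C).dir a b → a ∈ C → b ∈ C ∧ o.dir a b := by
    rintro a b (⟨hab, h⟩ | ⟨hab, h⟩) ha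
    · exact ⟨hab.mp ha, h⟩
    · by_cases hb : b ∈ C
      · exact absurd (iff_of_true ha hb) hab
      · exact absurd h (hC b hb a ha)
  intro w hw
  by_cases hwC : w ∈ C
  · exact ho w (hw.of_invariant forward hwC)
  · refine ho w (transGen_swap.mp ((transGen_swap.mpr hw).of_invariant (P := (· ∉ C)) ?_ hwC))
    intro a b hba ha
    have hb : b ∉ C := fun hb => ha (forward b a hba hb).1
    rcases hba with ⟨_, h⟩ | ⟨hba, _⟩
    · exact ⟨hb, h⟩
    · exact absurd (iff_of_false hb ha) hba

theorem Acyclic.exists_mem_forall_not_dir {o : EdgeOrientation G} (ho : o.Acyclic)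
    {C : Finset V} (hC : C.Nonempty) : ∃ t ∈ C, ∀ c ∈ C, ¬o.dir t c := by
  classical
  -- a vertex of `C` reaching the fewest vertices of `C` has no successor in `C`
  let reached (t : V) : Finset V := C.filter (TransGen o.dir t)
  obtain ⟨t, htC, hmin⟩ := C.exists_min_image (fun t => (reached t).card) hC
  refine ⟨t, htC, fun c hcC htc => ?_⟩
  have hsub : reached c ⊂ reached t := by
    refine Finset.ssubset_iff_of_subset ?_ |>.mpr ⟨c, ?_, ?_⟩
    · exact Finset.monotone_filter_right C fun x _ hcx => TransGen.head htc hcx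
    · exact Finset.mem_filter.mpr ⟨hcC, .single htc⟩
    · exact fun hc => ho c (Finset.mem_filter.mp hc).2
  exact (hmin c hcC).not_gt (Finset.card_lt_card hsub)

theorem isSink_reverseCut {o : EdgeOrientation G} {C : Set V}
    (hC : ∀ a ∉ C, ∀ b ∈ C, ¬o.dir a b) {t : V} (htC : t ∈ C) (ht : ∀ c ∈ C, ¬o.dir t c) :
    (o.reverseCut C).IsSink t := by
  rintro v (⟨htv, h⟩ | ⟨htv, h⟩)
  · exact ht v (htv.mp htC) h
  · exact hC v (fun hv => htv (iff_of_true htC hv)) t htC h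

theorem Acyclic.reach_reverseCut {o : EdgeOrientation G} (ho : o.Acyclic) (C : Finset V)
    (hC : ∀ a ∉ C, ∀ b ∈ C, ¬o.dir a b) : Reach (o.reverseCut C) o := by
  classical
  induction C using Finset.strongInduction with
  | H C ih =>
    rcases C.eq_empty_or_nonempty with rfl | hne
    · rw [Finset.coe_empty, reverseCut_empty]
      exact ReflTransGen.refl
    obtain ⟨t, htC, ht⟩ := ho.exists_mem_forall_not_dir hne
    have hfire : FireStep (o.reverseCut C) (o.reverseCut (C.erase t)) := by
      refine ⟨ho.reverseCut hC, t, isSink_reverseCut hC htC ht, ?_⟩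
      rw [fireDir_eq_reverseCut_singleton, reverseCut_reverseCut, Finset.coe_erase,
        symmDiff_of_le (Set.singleton_subset_iff.mpr htC)]
    have hC' : ∀ a ∉ C.erase t, ∀ b ∈ C.erase t, ¬o.dir a b := by
      intro a ha b hb
      rcases eq_or_ne a t with rfl | hat
      · exact ht b (Finset.mem_of_mem_erase hb)
      · exact hC a (fun haC => ha (Finset.mem_erase.mpr ⟨hat, haC⟩)) b
          (Finset.mem_of_mem_erase hb)
    exact ReflTransGen.head hfire (ih _ (Finset.erase_ssubset htC) hC')

theorem FireStep.reach_symm [Fintype V] {o o' : EdgeOrientation G} (h : FireStep o o') :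
    Reach o' o := by
  classical
  obtain ⟨ho, s, hs, hdir⟩ := h
  have ho' : o' = o.reverseCut ↑({s}ᶜ : Finset V) := by
    ext1
    rw [hdir, Finset.coe_compl, Finset.coe_singleton, reverseCut_compl,
      fireDir_eq_reverseCut_singleton]
  rw [ho']
  refine ho.reach_reverseCut _ fun a ha b _ => ?_
  rw [Finset.mem_compl, Finset.mem_singleton, not_not] at ha
  exact ha ▸ hs b

end EdgeOrientation

open EdgeOrientation in
/-- Reachability under sink firing is symmetric: if `v` is reachable from `u`
by a sequence of sink firings, then `u` is reachable from `v`. -/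
theorem reach_symm {V : Type*} [Fintype V] {G : SimpleGraph V}
    (u v : EdgeOrientation G) (h : Reach u v) : Reach v u := by
  induction h with
  | refl => exact Relation.ReflTransGen.refl
  | tail _ hstep ih => exact hstep.reach_symm.trans ih
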